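/- Let ε ∈ [0,1) and let N_AD be the qubit amplitude damping channel with Kraus operators A₀ = |0⟩⟨0| + √(1−ε)·|1⟩⟨1| and A₁ = √ε·|0⟩⟨1|, i.e. N_AD(ρ) = A₀ρA₀† + A₁ρA₁†. Let H be the swap operator on ℂ²⊗ℂ², let |Ψ±⟩ = (|01⟩ ± |10⟩)/√2, and define the linear map C on 4×4 complex matrices by C(ρ') = ⟨00|ρ'|00⟩·σ₁ + ⟨Ψ⁺|ρ'|Ψ⁺⟩·σ₁ + ⟨Ψ⁻|ρ'|Ψ⁻⟩·σ₃ + ⟨11|ρ'|11⟩·σ₄, where σ₁ = (1/6)·((1+2ε)·I₄ + (1−4ε)·H), σ₃ = (1/2)·(I₄ − H), σ₄ = (1/6)·(I₄ + H). Then for every density matrix ρ on ℂ², tr[ρ²] = (1/(1−ε)²)·tr[H · C(N_AD(ρ) ⊗ N_AD(ρ))] + ε²/(1−ε)². -/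

import Mathlib

open Matrix BigOperators Kronecker ComplexOrder

/-!
Since `H² = 1` and `tr H = 2`, the blocks of the retriever satisfy `tr[Hσ₁] = 1 − 2ε`,
`tr[Hσ₃] = −1` and `tr[Hσ₄] = 1`, and `⟨Ψ±|σ⊗σ|Ψ±⟩ = σ₀₀σ₁₁ ± σ₀₁σ₁₀`. Hence `tr[H·C(σ⊗σ)]` is an
explicit quadratic form in the entries of `σ`. For `σ = N_AD(ρ)` the diagonal of `σ` is
`(ρ₀₀ + ερ₁₁, (1−ε)ρ₁₁)` and `σ₀₁σ₁₀ = (1−ε)ρ₀₁ρ₁₀`; using `ρ₀₀ + ρ₁₁ = 1` the quadratic form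
collapses to `(1−ε)²·tr[ρ²] − ε²`.
-/

/-- Amplitude damping Kraus operator `A₀ = |0⟩⟨0| + √(1−ε)|1⟩⟨1|`. -/
noncomputable def A0 (ε : ℝ) : Matrix (Fin 2) (Fin 2) ℂ :=
  !![1, 0; 0, (Real.sqrt (1 - ε) : ℂ)]

/-- Amplitude damping Kraus operator `A₁ = √ε·|0⟩⟨1|`. -/
noncomputable def A1 (ε : ℝ) : Matrix (Fin 2) (Fin 2) ℂ :=
  !![0, (Real.sqrt ε : ℂ); 0, 0]

/-- The qubit amplitude damping channel `N_AD(ρ) = A₀ρA₀† + A₁ρA₁†`. -/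
noncomputable def NAD (ε : ℝ) (ρ : Matrix (Fin 2) (Fin 2) ℂ) : Matrix (Fin 2) (Fin 2) ℂ :=
  A0 ε * ρ * (A0 ε)ᴴ + A1 ε * ρ * (A1 ε)ᴴ

/-- The swap operator on `ℂ² ⊗ ℂ²`, `H(u⊗v) = v⊗u`. -/
noncomputable def Hswap : Matrix (Fin 2 × Fin 2) (Fin 2 × Fin 2) ℂ :=
  Matrix.of fun p q => if p.1 = q.2 ∧ p.2 = q.1 then 1 else 0

/-- `σ₁ = (1/6)((1+2ε)I₄ + (1−4ε)H)`. -/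
noncomputable def sig1 (ε : ℝ) : Matrix (Fin 2 × Fin 2) (Fin 2 × Fin 2) ℂ :=
  (1 / 6 : ℂ) • (((1 + 2 * ε : ℝ) : ℂ) • (1 : Matrix (Fin 2 × Fin 2) (Fin 2 × Fin 2) ℂ)
    + ((1 - 4 * ε : ℝ) : ℂ) • Hswap)

/-- `σ₃ = (1/2)(I₄ − H)`. -/
noncomputable def sig3 : Matrix (Fin 2 × Fin 2) (Fin 2 × Fin 2) ℂ :=
  (1 / 2 : ℂ) • ((1 : Matrix (Fin 2 × Fin 2) (Fin 2 × Fin 2) ℂ) - Hswap)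

/-- `σ₄ = (1/6)(I₄ + H)`. -/
noncomputable def sig4 : Matrix (Fin 2 × Fin 2) (Fin 2 × Fin 2) ℂ :=
  (1 / 6 : ℂ) • ((1 : Matrix (Fin 2 × Fin 2) (Fin 2 × Fin 2) ℂ) + Hswap)

/-- The amplitude damping retriever
`C(ρ') = ⟨00|ρ'|00⟩σ₁ + ⟨Ψ⁺|ρ'|Ψ⁺⟩σ₁ + ⟨Ψ⁻|ρ'|Ψ⁻⟩σ₃ + ⟨11|ρ'|11⟩σ₄`, where
`|Ψ±⟩ = (|01⟩ ± |10⟩)/√2`. -/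
noncomputable def CAD (ε : ℝ) (ρ' : Matrix (Fin 2 × Fin 2) (Fin 2 × Fin 2) ℂ) :
    Matrix (Fin 2 × Fin 2) (Fin 2 × Fin 2) ℂ :=
  ρ' (0, 0) (0, 0) • sig1 ε
    + ((1 / 2 : ℂ) * (ρ' (0, 1) (0, 1) + ρ' (1, 0) (1, 0)
        + ρ' (0, 1) (1, 0) + ρ' (1, 0) (0, 1))) • sig1 ε
    + ((1 / 2 : ℂ) * (ρ' (0, 1) (0, 1) + ρ' (1, 0) (1, 0)
        - ρ' (0, 1) (1, 0) - ρ' (1, 0) (0, 1))) • sig3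
    + ρ' (1, 1) (1, 1) • sig4

lemma Hswap_mul_Hswap : Hswap * Hswap = 1 := by
  ext p q
  fin_cases p <;> fin_cases q <;>
    simp [Hswap, Matrix.mul_apply, Fintype.sum_prod_type, Fin.sum_univ_two]

lemma trace_Hswap : Hswap.trace = 2 := by
  simp only [Matrix.trace, Fintype.sum_prod_type, Fin.sum_univ_two, Matrix.diag_apply, Hswap,
    Matrix.of_apply]
  norm_num

lemma trace_Hswap_mul_sig1 (ε : ℝ) : (Hswap * sig1 ε).trace = 1 - 2 * ε := by
  simp only [sig1, Matrix.mul_smul, Matrix.mul_add, Matrix.mul_one, Hswap_mul_Hswap,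
    Matrix.trace_smul, Matrix.trace_add, Matrix.trace_one, trace_Hswap, Fintype.card_prod,
    Fintype.card_fin, smul_eq_mul]
  push_cast
  ring

lemma trace_Hswap_mul_sig3 : (Hswap * sig3).trace = -1 := by
  simp only [sig3, Matrix.mul_smul, Matrix.mul_sub, Matrix.mul_one, Hswap_mul_Hswap,
    Matrix.trace_smul, Matrix.trace_sub, Matrix.trace_one, trace_Hswap, Fintype.card_prod,
    Fintype.card_fin, smul_eq_mul]
  norm_num

lemma trace_Hswap_mul_sig4 : (Hswap * sig4).trace = 1 := by
  simp only [sig4, Matrix.mul_smul, Matrix.mul_add, Matrix.mul_one, Hswap_mul_Hswap,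
    Matrix.trace_smul, Matrix.trace_add, Matrix.trace_one, trace_Hswap, Fintype.card_prod,
    Fintype.card_fin, smul_eq_mul]
  norm_num

lemma trace_Hswap_mul_CAD (ε : ℝ) (X : Matrix (Fin 2 × Fin 2) (Fin 2 × Fin 2) ℂ) :
    (Hswap * CAD ε X).trace
      = (1 - 2 * ε) * (X (0, 0) (0, 0)
          + (1 / 2) * (X (0, 1) (0, 1) + X (1, 0) (1, 0) + X (0, 1) (1, 0) + X (1, 0) (0, 1)))
        - (1 / 2) * (X (0, 1) (0, 1) + X (1, 0) (1, 0) - X (0, 1) (1, 0) - X (1, 0) (0, 1))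
        + X (1, 1) (1, 1) := by
  simp only [CAD, Matrix.mul_add, Matrix.mul_smul, Matrix.trace_add, Matrix.trace_smul,
    trace_Hswap_mul_sig1, trace_Hswap_mul_sig3, trace_Hswap_mul_sig4, smul_eq_mul]
  ring

lemma trace_Hswap_mul_CAD_kronecker_self (ε : ℝ) (σ : Matrix (Fin 2) (Fin 2) ℂ) :
    (Hswap * CAD ε (σ ⊗ₖ σ)).trace
      = (1 - 2 * ε) * (σ 0 0 ^ 2 + σ 0 0 * σ 1 1 + σ 0 1 * σ 1 0)
        - σ 0 0 * σ 1 1 + σ 0 1 * σ 1 0 + σ 1 1 ^ 2 := by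
  rw [trace_Hswap_mul_CAD]
  simp only [Matrix.kroneckerMap_apply]
  ring

lemma NAD_eq (ε : ℝ) (hε : 0 ≤ ε) (hε1 : ε ≤ 1) (ρ : Matrix (Fin 2) (Fin 2) ℂ) :
    NAD ε ρ = !![ρ 0 0 + ε * ρ 1 1, Real.sqrt (1 - ε) * ρ 0 1;
                 Real.sqrt (1 - ε) * ρ 1 0, (1 - ε) * ρ 1 1] := by
  have hsq : (Real.sqrt ε : ℂ) * Real.sqrt ε = ε := by
    exact_mod_cast Real.mul_self_sqrt hε
  have hsq' : (Real.sqrt (1 - ε) : ℂ) * Real.sqrt (1 - ε) = 1 - ε := by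
    exact_mod_cast Real.mul_self_sqrt (sub_nonneg.2 hε1)
  ext i j
  fin_cases i <;> fin_cases j <;>
    simp [NAD, A0, A1, Matrix.mul_apply, Matrix.vecMul, dotProduct, Fin.sum_univ_two] <;>
    grind

lemma trace_sq_fin_two {R : Type*} [CommRing R] (A : Matrix (Fin 2) (Fin 2) R) :
    (A ^ 2).trace = A 0 0 ^ 2 + A 1 1 ^ 2 + 2 * (A 0 1 * A 1 0) := by
  simp only [sq, Matrix.trace_fin_two, Matrix.mul_apply, Fin.sum_univ_two]
  ring

lemma trace_Hswap_mul_CAD_NAD_kronecker (ε : ℝ) (hε : 0 ≤ ε) (hε1 : ε ≤ 1)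
    (ρ : Matrix (Fin 2) (Fin 2) ℂ) (hρ1 : ρ.trace = 1) :
    (Hswap * CAD ε (NAD ε ρ ⊗ₖ NAD ε ρ)).trace = (1 - ε) ^ 2 * (ρ ^ 2).trace - ε ^ 2 := by
  have hs : (Real.sqrt (1 - ε) : ℂ) ^ 2 = 1 - ε := by
    exact_mod_cast Real.sq_sqrt (by linarith : 0 ≤ 1 - ε)
  have hd : ρ 1 1 = 1 - ρ 0 0 := by
    rw [Matrix.trace_fin_two] at hρ1
    linear_combination hρ1
  rw [trace_Hswap_mul_CAD_kronecker_self, NAD_eq ε hε hε1, trace_sq_fin_two]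
  simp only [Matrix.of_apply, Matrix.cons_val', Matrix.cons_val_zero, Matrix.cons_val_one,
    Matrix.empty_val', Matrix.cons_val_fin_one]
  rw [hd]
  linear_combination (2 - 2 * ε) * ρ 0 1 * ρ 1 0 * hs

theorem secondMoment_retriever_amplitudeDamping_general (ε : ℝ) (hε : 0 ≤ ε) (hε1 : ε < 1)
    (ρ : Matrix (Fin 2) (Fin 2) ℂ) (hρ1 : ρ.trace = 1) :
    (ρ ^ 2).trace
      = ((1 / (1 - ε) ^ 2 : ℝ) : ℂ) * (Hswap * CAD ε (NAD ε ρ ⊗ₖ NAD ε ρ)).trace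
        + ((ε ^ 2 / (1 - ε) ^ 2 : ℝ) : ℂ) := by
  have hne : (1 - ε : ℂ) ≠ 0 := by exact_mod_cast (sub_pos.2 hε1).ne'
  rw [trace_Hswap_mul_CAD_NAD_kronecker ε hε hε1.le ρ hρ1]
  push_cast
  field_simp
  ring

/-- for every `ε ∈ [0,1)` and every density matrix `ρ` on `ℂ²`,
`tr[ρ²] = (1/(1−ε)²)·tr[H · C(N_AD(ρ) ⊗ N_AD(ρ))] + ε²/(1−ε)²`. -/
theorem secondMoment_retriever_amplitudeDamping (ε : ℝ) (hε : 0 ≤ ε) (hε1 : ε < 1)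
    (ρ : Matrix (Fin 2) (Fin 2) ℂ) (hρ : ρ.PosSemidef) (hρ1 : ρ.trace = 1) :
    (ρ ^ 2).trace
      = ((1 / (1 - ε) ^ 2 : ℝ) : ℂ) * (Hswap * CAD ε (NAD ε ρ ⊗ₖ NAD ε ρ)).trace
        + ((ε ^ 2 / (1 - ε) ^ 2 : ℝ) : ℂ) :=
  secondMoment_retriever_amplitudeDamping_general ε hε hε1 ρ hρ1
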